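/- Let t be a rational number, V a vector space over ℚ, and f : V × V × V × V → ℚ a map that is linear in each argument and invariant under every permutation of its four arguments. Let H, δ ∈ V and assume that for all a, b ∈ ℚ one has f(aH + bδ, aH + bδ, aH + bδ, aH + bδ) = 3·(2t·a² − 2·b²)². If a rational number α' satisfies α' + 2·(6t) = 2·f(δ, H − δ, H − δ, H − δ), then α' = 12(t − 2). -/

import Mathlib

/-!
For a symmetric 4-linear form `f`, the quartic `a ↦ f(aδ + (H - δ), …)` expands binomially as
`∑ₖ C(4,k) aᵏ f(δ, …, δ, H - δ, …, H - δ)` (`k` copies of `δ`), while the Fujiki relation gives it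
as `3 (2t - 2(a - 1)²)²`. Comparing the coefficients of `a` yields
`4 f(δ, H - δ, H - δ, H - δ) = 48 (t - 1)`, hence `α' = 2 · 12(t - 1) - 12t = 12(t - 2)`.
-/

open Finset

namespace MultilinearMap

variable {R M N : Type*} [CommSemiring R] [AddCommMonoid M] [Module R M] [AddCommMonoid N]
  [Module R N] {n : ℕ} (f : MultilinearMap R (fun _ : Fin n => M) N)

theorem map_piecewise_const_of_symm
    (hf : ∀ (σ : Equiv.Perm (Fin n)) (v : Fin n → M), f (v ∘ σ) = f v)
    (s : Finset (Fin n)) (x y : M) :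
    f (s.piecewise (fun _ => x) (fun _ => y)) = f (fun i => if (i : ℕ) < #s then x else y) := by
  have hcard : #s = #{i : Fin n | (i : ℕ) < #s} := by
    rw [Fin.card_filter_val_lt, min_eq_right (by simpa using s.card_le_univ)]
  obtain ⟨σ, hσ⟩ := Equiv.Perm.exists_map_finset_eq _ _ hcard
  rw [← hf σ (fun i => if (i : ℕ) < #s then x else y)]
  congr 1
  ext i
  have hi : i ∈ s ↔ (σ i : ℕ) < #s := by
    rw [← mem_map' σ.toEmbedding, hσ, mem_filter_univ]
    rfl
  simp only [Finset.piecewise, hi, Function.comp_apply]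

theorem map_add_diag_of_symm (hf : ∀ (σ : Equiv.Perm (Fin n)) (v : Fin n → M), f (v ∘ σ) = f v)
    (x y : M) :
    f (fun _ => x + y) =
      ∑ k ∈ Finset.range (n + 1), n.choose k • f (fun i => if (i : ℕ) < k then x else y) := by
  classical
  rw [show (fun _ : Fin n => x + y) = (fun _ => x) + (fun _ => y) from rfl, map_add_univ]
  simp_rw [map_piecewise_const_of_symm f hf]
  rw [← powerset_univ, sum_powerset_apply_card (fun k => f fun i => if (i : ℕ) < k then x else y),
    card_univ, Fintype.card_fin]

theorem map_smul_add_smul_diag_of_symm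
    (hf : ∀ (σ : Equiv.Perm (Fin n)) (v : Fin n → M), f (v ∘ σ) = f v) (a b : R) (x y : M) :
    f (fun _ => a • x + b • y) =
      ∑ k ∈ Finset.range (n + 1),
        (n.choose k * a ^ k * b ^ (n - k)) • f (fun i => if (i : ℕ) < k then x else y) := by
  rw [map_add_diag_of_symm f hf]
  refine sum_congr rfl fun k hk => ?_
  have hsplit : (fun i : Fin n => if (i : ℕ) < k then a • x else b • y) =
      fun i : Fin n => (if (i : ℕ) < k then a else b) • (if (i : ℕ) < k then x else y) := by
    ext i
    split_ifs <;> rfl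
  have hprod : ∏ i : Fin n, (if (i : ℕ) < k then a else b) = a ^ k * b ^ (n - k) := by
    obtain ⟨m, rfl⟩ := Nat.exists_eq_add_of_le (Nat.lt_succ_iff.mp (mem_range.mp hk))
    rw [Fin.prod_univ_eq_prod_range (fun i => if i < k then a else b), prod_range_add,
      prod_congr rfl fun i hi => if_pos (mem_range.mp hi),
      prod_congr rfl fun i _ => if_neg (Nat.not_lt.mpr (Nat.le_add_right k i))]
    simp
  rw [hsplit, map_smul_univ, hprod, ← Nat.cast_smul_eq_nsmul R, smul_smul, mul_assoc]

end MultilinearMap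

theorem map_delta_sub_cube_eq_of_fujiki {t : ℚ} {V : Type*} [AddCommGroup V] [Module ℚ V]
    {f : MultilinearMap ℚ (fun _ : Fin 4 => V) ℚ}
    (hsymm : ∀ (σ : Equiv.Perm (Fin 4)) (v : Fin 4 → V), f (v ∘ σ) = f v) {H δ : V}
    (hdiag : ∀ a b : ℚ, f (fun _ => a • H + b • δ) = 3 * (2 * t * a ^ 2 - 2 * b ^ 2) ^ 2) :
    f ![δ, H - δ, H - δ, H - δ] = 12 * (t - 1) := by
  set c : ℕ → ℚ := fun k => f fun i => if (i : ℕ) < k then δ else H - δ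
  have hquartic : ∀ a : ℚ, c 0 + 4 * a * c 1 + 6 * a ^ 2 * c 2 + 4 * a ^ 3 * c 3 + a ^ 4 * c 4 =
      3 * (2 * t - 2 * (a - 1) ^ 2) ^ 2 := by
    intro a
    have h : ∑ k ∈ Finset.range 5, (Nat.choose 4 k * a ^ k * 1 ^ (4 - k)) * c k =
        3 * (2 * t * 1 ^ 2 - 2 * (a - 1) ^ 2) ^ 2 := by
      have hexp := (f.map_smul_add_smul_diag_of_symm hsymm a 1 δ (H - δ)).symm
      rwa [show a • δ + (1 : ℚ) • (H - δ) = (1 : ℚ) • H + (a - 1) • δ by module, hdiag] at hexp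
    simp only [Finset.sum_range_succ, Finset.sum_range_zero] at h
    norm_num [Nat.choose] at h
    linear_combination h
  have hc1 : c 1 = f ![δ, H - δ, H - δ, H - δ] := by
    simp only [c]
    congr 1
    funext i
    fin_cases i <;> rfl
  rw [← hc1]
  -- the five-point stencil computes the derivative at `0` exactly on quartics
  linear_combination (8 * (hquartic 1 - hquartic (-1)) - (hquartic 2 - hquartic (-2))) / 48

/-- Computational core of the degree of the tangent variety of a generic K3:
if `α' + 2·(6t) = 2δ·(H−δ)³` (the latter computed via the Fujiki relation,
modeled by a symmetric 4-multilinear form `f`), then `α' = 12(t−2)`. -/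
theorem stmt_3 (t : ℚ) (V : Type*) [AddCommGroup V] [Module ℚ V]
    (f : MultilinearMap ℚ (fun _ : Fin 4 => V) ℚ)
    (hsymm : ∀ (σ : Equiv.Perm (Fin 4)) (v : Fin 4 → V), f (v ∘ σ) = f v)
    (H δ : V)
    (hdiag : ∀ a b : ℚ,
      f (fun _ => a • H + b • δ) = 3 * (2 * t * a ^ 2 - 2 * b ^ 2) ^ 2)
    (α' : ℚ)
    (hα' : α' + 2 * (6 * t) = 2 * f ![δ, H - δ, H - δ, H - δ]) :
    α' = 12 * (t - 2) := by
  rw [map_delta_sub_cube_eq_of_fujiki hsymm hdiag] at hα'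
  linarith
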